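/- Let k be a field and F a coherent sheaf on the projective plane P²_k satisfying H⁰(F(m)) = 0 for m ≤ −1, H¹(F) = 0, and H²(F(m)) = 0 for m ≥ 0. Then for every m ≥ 2 the map ψ_m : H¹(F(m−1))^{⊕3} → H¹(F(m)), induced by the Koszul map O(−1)^{⊕3} → O on the coordinates u, v, w, is surjective. -/

import Mathlib

set_option synthInstance.maxHeartbeats 1000000
set_option maxHeartbeats 2000000

noncomputable section

namespace Paper

open Polynomial LaurentPolynomial

universe u v

variable (k : Type u) [Field k]

/-- The cohomological data of a coherent sheaf `F` on the projective plane `P²_k` with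
homogeneous coordinate ring `S = k[u,v,w]`.

* `H i m` is the sheaf cohomology `H^i(P², F(m))` (a finite-dimensional `k`-vector
  space, vanishing for `i ≥ 3`);
* `Z i m` is `H^i(P², (Syz ⊗ F)(m))`, where `Syz = ker(O(-1)³ → O)` is the syzygy bundle
  of the (exact) Koszul complex `0 → O(-3) → O(-2)³ → O(-1)³ → O → 0` on `u, v, w`;
* `aMap, psi, delta` form the long exact cohomology sequence of
  `0 → (Syz ⊗ F)(m) → F(m-1)³ → F(m) → 0`; in particular
  `psi i m : H^i(F(m-1))³ → H^i(F(m))` is the map induced by the Koszul map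
  `O(-1)³ → O` (i.e. `ψ_m` for `i = 1`);
* `dMap, eMap, fMap` form the long exact cohomology sequence of
  `0 → F(m-3) → F(m-2)³ → (Syz ⊗ F)(m) → 0`;
* `hilb` says that the Euler characteristic `m ↦ χ(F(m))` is a polynomial (the Hilbert
  polynomial of `F`). -/
structure CoherentCohP2 : Type (u + 1) where
  H : ℕ → ℤ → ModuleCat.{u} k
  Z : ℕ → ℤ → ModuleCat.{u} k
  findim : ∀ i m, FiniteDimensional k (H i m)
  findimZ : ∀ i m, FiniteDimensional k (Z i m)
  vanish3 : ∀ i : ℕ, 3 ≤ i → ∀ m : ℤ, Subsingleton (H i m)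
  aMap : ∀ (i : ℕ) (m : ℤ), ↥(Z i m) →ₗ[k] (Fin 3 → ↥(H i (m - 1)))
  psi : ∀ (i : ℕ) (m : ℤ), (Fin 3 → ↥(H i (m - 1))) →ₗ[k] ↥(H i m)
  delta : ∀ (i : ℕ) (m : ℤ), ↥(H i m) →ₗ[k] ↥(Z (i + 1) m)
  inj_a0 : ∀ m : ℤ, Function.Injective (aMap 0 m)
  ex1 : ∀ (i : ℕ) (m : ℤ), Function.Exact (aMap i m) (psi i m)
  ex2 : ∀ (i : ℕ) (m : ℤ), Function.Exact (psi i m) (delta i m)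
  ex3 : ∀ (i : ℕ) (m : ℤ), Function.Exact (delta i m) (aMap (i + 1) m)
  dMap : ∀ (i : ℕ) (m : ℤ), ↥(H i (m - 3)) →ₗ[k] (Fin 3 → ↥(H i (m - 2)))
  eMap : ∀ (i : ℕ) (m : ℤ), (Fin 3 → ↥(H i (m - 2))) →ₗ[k] ↥(Z i m)
  fMap : ∀ (i : ℕ) (m : ℤ), ↥(Z i m) →ₗ[k] ↥(H (i + 1) (m - 3))
  inj_d0 : ∀ m : ℤ, Function.Injective (dMap 0 m)
  ex4 : ∀ (i : ℕ) (m : ℤ), Function.Exact (dMap i m) (eMap i m)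
  ex5 : ∀ (i : ℕ) (m : ℤ), Function.Exact (eMap i m) (fMap i m)
  ex6 : ∀ (i : ℕ) (m : ℤ), Function.Exact (fMap i m) (dMap (i + 1) m)
  hilb : ∃ p : Polynomial ℚ, ∀ m : ℤ, p.eval (m : ℚ) =
    (Module.finrank k (H 0 m) : ℚ) - (Module.finrank k (H 1 m) : ℚ)
      + (Module.finrank k (H 2 m) : ℚ)

variable {k}

/-- The standing hypotheses (3.1) on `F`: `H⁰(F(m)) = 0` for `m ≤ −1`, `H¹(F) = 0`, and
`H²(F(m)) = 0` for `m ≥ 0`. -/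
def CoherentCohP2.StdHyp (F : CoherentCohP2 k) : Prop :=
  (∀ m : ℤ, m ≤ -1 → Subsingleton (F.H 0 m)) ∧ Subsingleton (F.H 1 0) ∧
    (∀ m : ℤ, 0 ≤ m → Subsingleton (F.H 2 m))

/- In the cohomology sequence of `0 → F(m-3) → F(m-2)³ → (Syz ⊗ F)(m) → 0` the group
`H²((Syz ⊗ F)(m))` sits between `H²(F(m-2))³ = 0` and `H³(F(m-3)) = 0`, so it vanishes; hence the
coboundary `H¹(F(m)) → H²((Syz ⊗ F)(m))` is zero and `ψ_m` is onto. -/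

theorem _root_.Function.Exact.subsingleton_of_subsingleton {R M N P : Type*} [Semiring R]
    [AddCommMonoid M] [AddCommMonoid N] [AddCommMonoid P] [Module R M] [Module R N] [Module R P]
    {f : M →ₗ[R] N} {g : N →ₗ[R] P} (h : Function.Exact f g) [Subsingleton M] [Subsingleton P] :
    Subsingleton N := by
  refine subsingleton_of_forall_eq 0 fun y => ?_
  obtain ⟨x, rfl⟩ := (h y).mp (Subsingleton.elim _ _)
  rw [Subsingleton.elim x 0, map_zero]

theorem CoherentCohP2.subsingleton_Z_two (F : CoherentCohP2 k) (m : ℤ)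
    [Subsingleton (F.H 2 (m - 2))] : Subsingleton (F.Z 2 m) :=
  have := F.vanish3 3 le_rfl (m - 3)
  (F.ex5 2 m).subsingleton_of_subsingleton

theorem CoherentCohP2.psi_surjective_of_subsingleton (F : CoherentCohP2 k) (i : ℕ) (m : ℤ)
    [Subsingleton (F.Z (i + 1) m)] : Function.Surjective (F.psi i m) :=
  (LinearMap.surjective_iff_eq_zero_of_exact (F.ex2 i m)).mpr (Subsingleton.elim _ _)

/-- Proposition 3.2(1).  Let `F` be a coherent sheaf on `P²_k` with
`H⁰(F(m)) = 0` for `m ≤ −1`, `H¹(F) = 0` and `H²(F(m)) = 0` for `m ≥ 0`.  Then for every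
`m ≥ 2` the Koszul map `ψ_m : H¹(F(m−1))³ → H¹(F(m))` is surjective. -/
theorem statement8 (F : CoherentCohP2 k) (hF : F.StdHyp) :
    ∀ m : ℤ, 2 ≤ m → Function.Surjective (F.psi 1 m) := by
  intro m hm
  have : Subsingleton (F.H 2 (m - 2)) := hF.2.2 _ (by omega)
  have := F.subsingleton_Z_two m
  exact F.psi_surjective_of_subsingleton 1 m

end Paper
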